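/- Let β, δ ∈ (0,1), n ∈ ℕ, D a probability distribution on Z. Fix a measurable probability kernel Q : Z^n → P(H) and let J ⊆ [n] be a (possibly random) subset of nonrandom cardinality m < n, independent of S ∼ D^n. Let P* = E_S[Q(S)] be the oracle prior and P*(S_J) = E[Q(S) | S_J, J] the data-dependent oracle prior (conditional mixture). Define the information rate gain R_gain = E[KL(Q(S)‖P*)]/n − E[KL(Q(S)‖P*(S_J))]/(n−m) and the excess bias B_ex = E[L̂_{S∖S_J}(Q(S)) − L̂_S(Q(S))]. Then E_{J,S}[Ψ_{β,δ}(Q(S), P*(S_J); S∖S_J)] ≤ E_S[Ψ_{β,δ}(Q(S), P*; S)] if and only if R_gain ≥ 2(1−β)·B_ex + (log(1/δ)/n)·(m/(n−m)). -/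

import Mathlib

/-!
Both bound functionals are affine in the empirical risk and in the KL term, and the KL term
enters only through its expectation. So, after checking that every expectation involved is
finite, the two expected bounds are real numbers of the form `(1/β)·L + (K + log(1/δ))/(2β(1−β)N)`
with `N = n` and `N = n − m`, and the claimed equivalence is a rearrangement of
`E_{J,S}[Ψ(…; S∖S_J)] ≤ E_S[Ψ(…; S)]` after multiplying by `2β(1−β) > 0`.
-/

open MeasureTheory Set
open scoped ENNReal NNReal

-- Kullback–Leibler divergence, valued in `ℝ≥0∞`: equal to `∫ log(dQ/dP) dQ` when
-- `Q ≪ P` and this integral is well defined, and `∞` otherwise.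
open Classical in
noncomputable def klDivE {H : Type*} [MeasurableSpace H] (Q P : Measure H) : ℝ≥0∞ :=
  if Q ≪ P ∧ Integrable (llr Q P) Q
  then ENNReal.ofReal (∫ h, llr Q P h ∂Q)
  else ⊤

noncomputable def gibbsRisk {H Z : Type*} [MeasurableSpace H] [MeasurableSpace Z]
    (ℓ : H → Z → ℝ) (D : Measure Z) (Q : Measure H) : ℝ :=
  ∫ h, ∫ z, ℓ h z ∂D ∂Q

noncomputable def gibbsEmpRisk {H Z : Type*} [MeasurableSpace H]
    (ℓ : H → Z → ℝ) {n : ℕ} (S : Fin n → Z) (Q : Measure H) : ℝ :=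
  ∫ h, (∑ i, ℓ h (S i)) / n ∂Q

-- `L̂_{S∖S_J}(Q)`.
noncomputable def gibbsEmpRiskCompl {H Z : Type*} [MeasurableSpace H]
    (ℓ : H → Z → ℝ) {n : ℕ} (J : Finset (Fin n)) (S : Fin n → Z) (Q : Measure H) : ℝ :=
  ∫ h, (∑ i ∈ Jᶜ, ℓ h (S i)) / (n - J.card : ℝ) ∂Q

noncomputable def Psi {H Z : Type*} [MeasurableSpace H]
    (ℓ : H → Z → ℝ) (β δ : ℝ) {n : ℕ} (Q P : Measure H) (S : Fin n → Z) : ℝ≥0∞ :=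
  ENNReal.ofReal ((1 / β) * gibbsEmpRisk ℓ S Q) +
    (klDivE Q P + ENNReal.ofReal (Real.log (1 / δ))) /
      ENNReal.ofReal (2 * β * (1 - β) * n)

-- `Ψ_{β,δ}(Q, P; S∖S_J)`, for a sample of size `n − |J|`.
noncomputable def PsiCompl {H Z : Type*} [MeasurableSpace H]
    (ℓ : H → Z → ℝ) (β δ : ℝ) {n : ℕ} (J : Finset (Fin n))
    (Q P : Measure H) (S : Fin n → Z) : ℝ≥0∞ :=
  ENNReal.ofReal ((1 / β) * gibbsEmpRiskCompl ℓ J S Q) +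
    (klDivE Q P + ENNReal.ofReal (Real.log (1 / δ))) /
      ENNReal.ofReal (2 * β * (1 - β) * (n - J.card : ℝ))

noncomputable def mergeSample {Z : Type*} {n : ℕ} (J : Finset (Fin n))
    (x : {i : Fin n // i ∈ J} → Z) (y : {i : Fin n // i ∉ J} → Z) : Fin n → Z :=
  fun i => if h : i ∈ J then x ⟨i, h⟩ else y ⟨i, h⟩

-- The data-dependent oracle prior `P*(S_J) = E[Q(S) | S_J]`.
noncomputable def condOraclePrior {Z H : Type*} [MeasurableSpace Z] [MeasurableSpace H]
    {n : ℕ} (J : Finset (Fin n)) (D : Measure Z)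
    (Q : (Fin n → Z) → Measure H) (x : {i : Fin n // i ∈ J} → Z) : Measure H :=
  (Measure.pi fun _ : {i : Fin n // i ∉ J} => D).bind fun y => Q (mergeSample J x y)

theorem linearBound_le_iff {β lg a b k₀ k₁ N M : ℝ} (hβ₀ : 0 < β) (hβ₁ : β < 1) (hM : 0 ≤ M)
    (hMN : M < N) :
    (1 / β) * b + (k₁ + lg) / (2 * β * (1 - β) * (N - M)) ≤
        (1 / β) * a + (k₀ + lg) / (2 * β * (1 - β) * N) ↔
      k₀ / N - k₁ / (N - M) ≥ 2 * (1 - β) * (b - a) + (lg / N) * (M / (N - M)) := by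
  have hN : 0 < N := hM.trans_lt hMN
  have hNM : 0 < N - M := sub_pos.2 hMN
  have hβ' : 0 < 1 - β := sub_pos.2 hβ₁
  have key : (1 / β) * a + (k₀ + lg) / (2 * β * (1 - β) * N) -
      ((1 / β) * b + (k₁ + lg) / (2 * β * (1 - β) * (N - M))) =
      (k₀ / N - k₁ / (N - M) - (2 * (1 - β) * (b - a) + (lg / N) * (M / (N - M)))) /
        (2 * β * (1 - β)) := by
    field_simp
    ring
  rw [← sub_nonneg, key, le_div_iff₀ (by positivity), zero_mul, ge_iff_le, sub_nonneg]

theorem lintegral_ofReal_add_div {α : Type*} [MeasurableSpace α] {μ : Measure α}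
    [IsProbabilityMeasure μ] {f : α → ℝ} {g : α → ℝ≥0∞} {L a : ℝ} (hf : Integrable f μ)
    (hf₀ : ∀ x, 0 ≤ f x) (hg : ∫⁻ x, g x ∂μ ≠ ⊤) (hL : 0 ≤ L) (ha : 0 < a) :
    ∫⁻ x, ENNReal.ofReal (f x) + (g x + ENNReal.ofReal L) / ENNReal.ofReal a ∂μ =
      ENNReal.ofReal (∫ x, f x ∂μ + ((∫⁻ x, g x ∂μ).toReal + L) / a) := by
  simp_rw [ENNReal.div_eq_inv_mul]
  rw [lintegral_add_left' hf.aemeasurable.ennreal_ofReal,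
    ← ofReal_integral_eq_lintegral_ofReal hf (ae_of_all _ hf₀),
    lintegral_const_mul' _ _ (ENNReal.inv_ne_top.2 (ENNReal.ofReal_pos.2 ha).ne'),
    lintegral_add_right _ measurable_const, lintegral_const, measure_univ, mul_one,
    ENNReal.ofReal_add (integral_nonneg hf₀) (by positivity), ENNReal.ofReal_div_of_pos ha,
    ENNReal.ofReal_add ENNReal.toReal_nonneg hL, ENNReal.ofReal_toReal hg, ENNReal.div_eq_inv_mul]

theorem Finset.sum_mul_affine_of_sum_eq_one {ι : Type*} (s : Finset ι) {w a k : ι → ℝ}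
    (hw : ∑ i ∈ s, w i = 1) (p L c : ℝ) :
    ∑ i ∈ s, w i * (p * a i + (k i + L) / c) =
      p * ∑ i ∈ s, w i * a i + (∑ i ∈ s, w i * k i + L) / c := by
  have hL : ∑ i ∈ s, w i * L / c = L / c := by
    rw [← Finset.sum_div, ← Finset.sum_mul, hw, one_mul]
  calc ∑ i ∈ s, w i * (p * a i + (k i + L) / c)
      = ∑ i ∈ s, (p * (w i * a i) + w i * k i / c + w i * L / c) :=
        Finset.sum_congr rfl fun i _ => by ring
    _ = _ := by
        rw [Finset.sum_add_distrib, Finset.sum_add_distrib, hL, ← Finset.mul_sum, ← Finset.sum_div]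
        ring

namespace PMF

variable {ι : Type*} [Fintype ι] (ν : PMF ι)

theorem sum_toReal_eq_one : ∑ i, (ν i).toReal = 1 := by
  have h := ν.tsum_coe
  rw [tsum_fintype] at h
  rw [← ENNReal.toReal_sum fun i _ => ν.apply_ne_top i, h, ENNReal.toReal_one]

theorem sum_mul_eq_ofReal {a : ι → ℝ≥0∞} {x : ι → ℝ} (hx : ∀ i, 0 ≤ x i)
    (ha : ∀ i ∈ ν.support, a i = ENNReal.ofReal (x i)) :
    ∑ i, ν i * a i = ENNReal.ofReal (∑ i, (ν i).toReal * x i) := by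
  rw [ENNReal.ofReal_sum_of_nonneg fun i _ => mul_nonneg ENNReal.toReal_nonneg (hx i)]
  refine Finset.sum_congr rfl fun i _ => ?_
  by_cases hi : i ∈ ν.support
  · rw [ha i hi, ENNReal.ofReal_mul ENNReal.toReal_nonneg, ENNReal.ofReal_toReal (ν.apply_ne_top i)]
  · simp [(ν.apply_eq_zero_iff i).2 hi]

theorem sum_toReal_mul_sub (a : ι → ℝ) (b : ℝ) :
    ∑ i, (ν i).toReal * (a i - b) = ∑ i, (ν i).toReal * a i - b := by
  simp only [mul_sub, Finset.sum_sub_distrib, ← Finset.sum_mul, ν.sum_toReal_eq_one, one_mul]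

theorem ne_top_of_sum_mul_ne_top {a : ι → ℝ≥0∞} (h : ∑ i, ν i * a i ≠ ⊤) {i : ι}
    (hi : i ∈ ν.support) : a i ≠ ⊤ := fun hai =>
  ENNReal.sum_ne_top.1 h i (Finset.mem_univ i) (by rw [hai, ENNReal.mul_top hi])

theorem toReal_sum_mul {a : ι → ℝ≥0∞} (h : ∑ i, ν i * a i ≠ ⊤) :
    (∑ i, ν i * a i).toReal = ∑ i, (ν i).toReal * (a i).toReal := by
  rw [ENNReal.toReal_sum fun i hi => ENNReal.sum_ne_top.1 h i hi]
  simp only [ENNReal.toReal_mul]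

end PMF

section EmpiricalRisk

variable {Z H : Type*} [MeasurableSpace H] {ℓ : H → Z → ℝ} {n : ℕ}

theorem integral_sum_loss_div_mem_Icc (hℓ : ∀ h z, ℓ h z ∈ Icc (0 : ℝ) 1) (Qm : Measure H)
    [IsProbabilityMeasure Qm] {T : Finset (Fin n)} {c : ℝ} (hT : (T.card : ℝ) ≤ c)
    (S : Fin n → Z) :
    ∫ h, (∑ i ∈ T, ℓ h (S i)) / c ∂Qm ∈ Icc (0 : ℝ) 1 := by
  have hc : 0 ≤ c := T.card.cast_nonneg.trans hT
  have hsum : ∀ h, 0 ≤ ∑ i ∈ T, ℓ h (S i) := fun h => Finset.sum_nonneg fun i _ => (hℓ _ _).1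
  have hle : ∀ h, (∑ i ∈ T, ℓ h (S i)) / c ≤ 1 := fun h =>
    div_le_one_of_le₀ ((Finset.sum_le_card_nsmul T _ 1 fun i _ => (hℓ _ _).2).trans
      (by simpa using hT)) hc
  refine ⟨integral_nonneg fun h => div_nonneg (hsum h) hc, ?_⟩
  calc ∫ h, (∑ i ∈ T, ℓ h (S i)) / c ∂Qm
      ≤ ‖∫ h, (∑ i ∈ T, ℓ h (S i)) / c ∂Qm‖ := Real.le_norm_self _
    _ ≤ 1 * Qm.real univ := norm_integral_le_of_norm_le_const (ae_of_all _ fun h => by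
        rw [Real.norm_of_nonneg (div_nonneg (hsum h) hc)]; exact hle h)
    _ = 1 := by simp

theorem gibbsEmpRisk_mem_Icc (hℓ : ∀ h z, ℓ h z ∈ Icc (0 : ℝ) 1) (S : Fin n → Z)
    (Qm : Measure H) [IsProbabilityMeasure Qm] : gibbsEmpRisk ℓ S Qm ∈ Icc (0 : ℝ) 1 :=
  integral_sum_loss_div_mem_Icc hℓ Qm (by simp) S

theorem gibbsEmpRiskCompl_mem_Icc (hℓ : ∀ h z, ℓ h z ∈ Icc (0 : ℝ) 1) (J : Finset (Fin n))
    (S : Fin n → Z) (Qm : Measure H) [IsProbabilityMeasure Qm] :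
    gibbsEmpRiskCompl ℓ J S Qm ∈ Icc (0 : ℝ) 1 :=
  integral_sum_loss_div_mem_Icc hℓ Qm (by
    rw [Finset.card_compl, Fintype.card_fin, Nat.cast_sub (by simpa using J.card_le_univ)]) S

variable [MeasurableSpace Z] {Q : (Fin n → Z) → Measure H}

theorem measurable_integral_sum_loss_div (hℓmeas : Measurable (Function.uncurry ℓ))
    (hQmeas : Measurable Q) (hQprob : ∀ S, IsProbabilityMeasure (Q S)) (T : Finset (Fin n))
    (c : ℝ) : Measurable fun S => ∫ h, (∑ i ∈ T, ℓ h (S i)) / c ∂(Q S) := by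
  let κ : ProbabilityTheory.Kernel (Fin n → Z) H := ⟨Q, hQmeas⟩
  have : ProbabilityTheory.IsMarkovKernel κ := ⟨hQprob⟩
  have hf : Measurable fun p : (Fin n → Z) × H => (∑ i ∈ T, ℓ p.2 (p.1 i)) / c :=
    (Finset.measurable_sum T fun i _ =>
      hℓmeas.comp (measurable_snd.prodMk ((measurable_pi_apply i).comp measurable_fst))).div_const c
  exact (hf.stronglyMeasurable.integral_kernel_prod_right' (κ := κ)).measurable

theorem integrable_gibbsEmpRisk (hℓmeas : Measurable (Function.uncurry ℓ))
    (hℓ : ∀ h z, ℓ h z ∈ Icc (0 : ℝ) 1) (hQmeas : Measurable Q)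
    (hQprob : ∀ S, IsProbabilityMeasure (Q S)) (μ : Measure (Fin n → Z)) [IsFiniteMeasure μ] :
    Integrable (fun S => gibbsEmpRisk ℓ S (Q S)) μ :=
  .of_bound (measurable_integral_sum_loss_div hℓmeas hQmeas hQprob _ _).aestronglyMeasurable 1
    (ae_of_all _ fun S => by
      obtain ⟨h₀, h₁⟩ := gibbsEmpRisk_mem_Icc hℓ S (Q S)
      rwa [Real.norm_of_nonneg h₀])

theorem integrable_gibbsEmpRiskCompl (hℓmeas : Measurable (Function.uncurry ℓ))
    (hℓ : ∀ h z, ℓ h z ∈ Icc (0 : ℝ) 1) (hQmeas : Measurable Q)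
    (hQprob : ∀ S, IsProbabilityMeasure (Q S)) (J : Finset (Fin n)) (μ : Measure (Fin n → Z))
    [IsFiniteMeasure μ] : Integrable (fun S => gibbsEmpRiskCompl ℓ J S (Q S)) μ :=
  .of_bound (measurable_integral_sum_loss_div hℓmeas hQmeas hQprob _ _).aestronglyMeasurable 1
    (ae_of_all _ fun S => by
      obtain ⟨h₀, h₁⟩ := gibbsEmpRiskCompl_mem_Icc hℓ J S (Q S)
      rwa [Real.norm_of_nonneg h₀])

end EmpiricalRisk

section ExpectedBound

variable {Z H : Type*} [MeasurableSpace Z] [MeasurableSpace H] {ℓ : H → Z → ℝ} {n : ℕ}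
  {Q P : (Fin n → Z) → Measure H} {β δ : ℝ} {μ : Measure (Fin n → Z)} [IsProbabilityMeasure μ]

theorem lintegral_Psi_eq_ofReal (hℓmeas : Measurable (Function.uncurry ℓ))
    (hℓ : ∀ h z, ℓ h z ∈ Icc (0 : ℝ) 1) (hQmeas : Measurable Q)
    (hQprob : ∀ S, IsProbabilityMeasure (Q S)) (hβ : β ∈ Ioo (0 : ℝ) 1) (hδ : δ ∈ Ioc (0 : ℝ) 1)
    (hn : 0 < n) (hKL : ∫⁻ S, klDivE (Q S) (P S) ∂μ ≠ ⊤) :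
    ∫⁻ S, Psi ℓ β δ (Q S) (P S) S ∂μ = ENNReal.ofReal
      ((1 / β) * ∫ S, gibbsEmpRisk ℓ S (Q S) ∂μ +
        ((∫⁻ S, klDivE (Q S) (P S) ∂μ).toReal + Real.log (1 / δ)) / (2 * β * (1 - β) * n)) := by
  have hκ : 0 < 2 * β * (1 - β) := mul_pos (mul_pos two_pos hβ.1) (sub_pos.2 hβ.2)
  rw [← integral_const_mul]
  exact lintegral_ofReal_add_div ((integrable_gibbsEmpRisk hℓmeas hℓ hQmeas hQprob μ).const_mul _)
    (fun S => mul_nonneg (one_div_nonneg.2 hβ.1.le) (gibbsEmpRisk_mem_Icc hℓ S (Q S)).1) hKL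
    (Real.log_nonneg (one_le_one_div hδ.1 hδ.2)) (mul_pos hκ (Nat.cast_pos.2 hn))

theorem lintegral_PsiCompl_eq_ofReal (hℓmeas : Measurable (Function.uncurry ℓ))
    (hℓ : ∀ h z, ℓ h z ∈ Icc (0 : ℝ) 1) (hQmeas : Measurable Q)
    (hQprob : ∀ S, IsProbabilityMeasure (Q S)) (hβ : β ∈ Ioo (0 : ℝ) 1) (hδ : δ ∈ Ioc (0 : ℝ) 1)
    {J : Finset (Fin n)} (hJ : J.card < n) (hKL : ∫⁻ S, klDivE (Q S) (P S) ∂μ ≠ ⊤) :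
    ∫⁻ S, PsiCompl ℓ β δ J (Q S) (P S) S ∂μ = ENNReal.ofReal
      ((1 / β) * ∫ S, gibbsEmpRiskCompl ℓ J S (Q S) ∂μ +
        ((∫⁻ S, klDivE (Q S) (P S) ∂μ).toReal + Real.log (1 / δ)) /
          (2 * β * (1 - β) * (n - J.card))) := by
  have hκ : 0 < 2 * β * (1 - β) := mul_pos (mul_pos two_pos hβ.1) (sub_pos.2 hβ.2)
  rw [← integral_const_mul]
  exact lintegral_ofReal_add_div
    ((integrable_gibbsEmpRiskCompl hℓmeas hℓ hQmeas hQprob J μ).const_mul _)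
    (fun S => mul_nonneg (one_div_nonneg.2 hβ.1.le) (gibbsEmpRiskCompl_mem_Icc hℓ J S (Q S)).1)
    hKL (Real.log_nonneg (one_le_one_div hδ.1 hδ.2))
    (mul_pos hκ (sub_pos.2 (Nat.cast_lt.2 hJ)))

end ExpectedBound

theorem data_dependent_oracle_prior_iff
    {Z H : Type*} [MeasurableSpace Z] [MeasurableSpace H]
    (ℓ : H → Z → ℝ) (hℓmeas : Measurable (Function.uncurry ℓ))
    (hℓ : ∀ h z, ℓ h z ∈ Icc (0 : ℝ) 1)
    {β δ : ℝ} (hβ : β ∈ Ioo (0 : ℝ) 1) (hδ : δ ∈ Ioo (0 : ℝ) 1)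
    {n m : ℕ} (hm : m < n)
    (D : Measure Z) [IsProbabilityMeasure D]
    (Q : (Fin n → Z) → Measure H) (hQmeas : Measurable Q)
    (hQprob : ∀ S, IsProbabilityMeasure (Q S))
    (ν : PMF (Finset (Fin n))) (hν : ∀ J ∈ ν.support, J.card = m)
    -- the expected KL divergences are finite, so that the information rate
    -- gain is a well-defined real number
    (hfin₀ : ∫⁻ S, klDivE (Q S) ((Measure.pi fun _ : Fin n => D).bind Q)
        ∂(Measure.pi fun _ : Fin n => D) ≠ ⊤)
    (hfin₁ : ∑ J : Finset (Fin n), ν J *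
        ∫⁻ S, klDivE (Q S) (condOraclePrior J D Q fun i => S i.1)
          ∂(Measure.pi fun _ : Fin n => D) ≠ ⊤) :
    (∑ J : Finset (Fin n), ν J *
        ∫⁻ S, PsiCompl ℓ β δ J (Q S) (condOraclePrior J D Q fun i => S i.1) S
          ∂(Measure.pi fun _ : Fin n => D)) ≤
      (∫⁻ S, Psi ℓ β δ (Q S) ((Measure.pi fun _ : Fin n => D).bind Q) S
          ∂(Measure.pi fun _ : Fin n => D)) ↔
    (∫⁻ S, klDivE (Q S) ((Measure.pi fun _ : Fin n => D).bind Q)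
          ∂(Measure.pi fun _ : Fin n => D)).toReal / n -
      (∑ J : Finset (Fin n), ν J *
          ∫⁻ S, klDivE (Q S) (condOraclePrior J D Q fun i => S i.1)
            ∂(Measure.pi fun _ : Fin n => D)).toReal / (n - m : ℝ) ≥
    2 * (1 - β) *
        (∑ J : Finset (Fin n), (ν J).toReal *
          ∫ S, (gibbsEmpRiskCompl ℓ J S (Q S) - gibbsEmpRisk ℓ S (Q S))
            ∂(Measure.pi fun _ : Fin n => D)) +
      (Real.log (1 / δ) / n) * (m / (n - m : ℝ)) := by
  obtain ⟨hβ₀, hβ₁⟩ := hβ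
  have hδ' : δ ∈ Ioc (0 : ℝ) 1 := ⟨hδ.1, hδ.2.le⟩
  set μ : Measure (Fin n → Z) := Measure.pi fun _ : Fin n => D
  have hmn : (m : ℝ) < n := by exact_mod_cast hm
  have hlog : 0 ≤ Real.log (1 / δ) := Real.log_nonneg (one_le_one_div hδ.1 hδ.2.le)
  set x : Finset (Fin n) → ℝ := fun J => (1 / β) * ∫ S, gibbsEmpRiskCompl ℓ J S (Q S) ∂μ +
    ((∫⁻ S, klDivE (Q S) (condOraclePrior J D Q fun i => S i.1) ∂μ).toReal +
      Real.log (1 / δ)) / (2 * β * (1 - β) * (n - m))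
  have hPsiCompl : (∑ J : Finset (Fin n), ν J *
      ∫⁻ S, PsiCompl ℓ β δ J (Q S) (condOraclePrior J D Q fun i => S i.1) S ∂μ) =
      ENNReal.ofReal (∑ J, (ν J).toReal * x J) := by
    refine ν.sum_mul_eq_ofReal (fun J => ?_) fun J hJ => ?_
    · have := (integral_nonneg fun S => (gibbsEmpRiskCompl_mem_Icc hℓ J S (Q S)).1 :
        0 ≤ ∫ S, gibbsEmpRiskCompl ℓ J S (Q S) ∂μ)
      positivity
    · rw [lintegral_PsiCompl_eq_ofReal hℓmeas hℓ hQmeas hQprob ⟨hβ₀, hβ₁⟩ hδ' (hν J hJ ▸ hm)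
        (ν.ne_top_of_sum_mul_ne_top hfin₁ hJ), hν J hJ]
  have hRisk₀ : 0 ≤ ∫ S, gibbsEmpRisk ℓ S (Q S) ∂μ :=
    integral_nonneg fun S => (gibbsEmpRisk_mem_Icc hℓ S (Q S)).1
  simp only [integral_sub (integrable_gibbsEmpRiskCompl hℓmeas hℓ hQmeas hQprob _ μ)
    (integrable_gibbsEmpRisk hℓmeas hℓ hQmeas hQprob μ)]
  rw [hPsiCompl, lintegral_Psi_eq_ofReal hℓmeas hℓ hQmeas hQprob ⟨hβ₀, hβ₁⟩ hδ'
      (m.zero_le.trans_lt hm) hfin₀, ENNReal.ofReal_le_ofReal_iff (by positivity),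
    ν.toReal_sum_mul hfin₁, ν.sum_toReal_mul_sub,
    Finset.sum_mul_affine_of_sum_eq_one _ ν.sum_toReal_eq_one]
  exact linearBound_le_iff hβ₀ hβ₁ m.cast_nonneg hmn
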